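/- The set Z is invariant under the action of H = SL₂(ℂ) × GL₂(ℂ) × ℂˣ: for every (h₁,h₂,z) ∈ H and every (B₁,B₂) ∈ Z, the pair (z · h₂* · B₁ · h₁⁻¹, h₂ · B₂ · h₁⁻¹) again lies in Z. -/

import Mathlib

open Matrix

/-- The matrix `J = !![0,-1; 1,0]`. -/
def MJ : Matrix (Fin 2) (Fin 2) ℂ := !![0, -1; 1, 0]

/-- The matrix `T = !![0,1; 1,0]`. -/
def MT : Matrix (Fin 2) (Fin 2) ℂ := !![0, 1; 1, 0]

/-- The variety `Z` of pairs of 2×2 matrices. -/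
def Z : Set (Matrix (Fin 2) (Fin 2) ℂ × Matrix (Fin 2) (Fin 2) ℂ) :=
  {p | p.1.det = 0 ∧ p.2.det = 0 ∧ p.1 * MJ * p.2ᵀ = 0 ∧ p.2ᵀ * MT * p.1 = 0}

/-- For `g = !![a,b; c,d]` with determinant `Δ`, `g* = Δ⁻¹ • !![a,-b; -c,d]`. -/
noncomputable def gstar (g : Matrix (Fin 2) (Fin 2) ℂ) : Matrix (Fin 2) (Fin 2) ℂ :=
  (g.det)⁻¹ • !![g 0 0, -(g 0 1); -(g 1 0), g 1 1]

/-- The group `H = SL₂(ℂ) × GL₂(ℂ) × ℂˣ`. -/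
abbrev H := Matrix.SpecialLinearGroup (Fin 2) ℂ × GL (Fin 2) ℂ × ℂˣ

/-- The action `(h₁,h₂,z)·(B₁,B₂) = (z · h₂* · B₁ · h₁⁻¹, h₂ · B₂ · h₁⁻¹)`. -/
noncomputable def act (h : H) (v : Matrix (Fin 2) (Fin 2) ℂ × Matrix (Fin 2) (Fin 2) ℂ) :
    Matrix (Fin 2) (Fin 2) ℂ × Matrix (Fin 2) (Fin 2) ℂ :=
  ((h.2.2 : ℂ) • (gstar (h.2.1 : Matrix (Fin 2) (Fin 2) ℂ) * v.1 *
      ((h.1⁻¹ : Matrix.SpecialLinearGroup (Fin 2) ℂ) : Matrix (Fin 2) (Fin 2) ℂ)),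
    (h.2.1 : Matrix (Fin 2) (Fin 2) ℂ) * v.2 *
      ((h.1⁻¹ : Matrix.SpecialLinearGroup (Fin 2) ℂ) : Matrix (Fin 2) (Fin 2) ℂ))

lemma AJA (A : Matrix (Fin 2) (Fin 2) ℂ) : A * MJ * Aᵀ = A.det • MJ := by
  ext i j
  fin_cases i <;> fin_cases j <;>
    simp [MJ, Matrix.mul_apply, Matrix.det_fin_two, Fin.sum_univ_two] <;> ring

lemma TMgstar (g : Matrix (Fin 2) (Fin 2) ℂ) (hg : g.det ≠ 0) :
    gᵀ * MT * gstar g = MT := by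
  have hd : g 0 0 * g 1 1 - g 0 1 * g 1 0 ≠ 0 := by rwa [Matrix.det_fin_two] at hg
  ext i j
  fin_cases i <;> fin_cases j <;>
    simp [MT, gstar, Matrix.mul_apply, Fin.sum_univ_two, Matrix.det_fin_two] <;>
    field_simp [show -(g 1 0 * g 0 1) + g 0 0 * g 1 1 ≠ 0 by intro h; apply hd; linear_combination h,
      show g 1 1 * g 0 0 - g 0 1 * g 1 0 ≠ 0 by intro h; apply hd; linear_combination h] <;>
    ring_nf <;>
    field_simp [show -(g 1 0 * g 0 1) + g 0 0 * g 1 1 ≠ 0 by intro h; apply hd; linear_combination h]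

theorem stmt3 (h : H) (v : Matrix (Fin 2) (Fin 2) ℂ × Matrix (Fin 2) (Fin 2) ℂ)
    (hv : v ∈ Z) : act h v ∈ Z := by
  obtain ⟨h1, h2, h3, h4⟩ := hv
  set g1 : Matrix (Fin 2) (Fin 2) ℂ := ((h.1⁻¹ : Matrix.SpecialLinearGroup (Fin 2) ℂ) : Matrix (Fin 2) (Fin 2) ℂ) with hg1
  set g2 : Matrix (Fin 2) (Fin 2) ℂ := (h.2.1 : Matrix (Fin 2) (Fin 2) ℂ) with hg2
  have hg1det : g1.det = 1 := (h.1⁻¹).2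
  have hg2det : g2.det ≠ 0 := by
    rw [hg2]
    exact (Matrix.isUnit_iff_isUnit_det _).mp h.2.1.isUnit |>.ne_zero
  refine ⟨?_, ?_, ?_, ?_⟩
  · show ((h.2.2 : ℂ) • (gstar g2 * v.1 * g1)).det = 0
    rw [Matrix.det_smul, Matrix.det_mul, Matrix.det_mul, h1]
    simp
  · show (g2 * v.2 * g1).det = 0
    rw [Matrix.det_mul, Matrix.det_mul, h2]
    simp
  · show (h.2.2 : ℂ) • (gstar g2 * v.1 * g1) * MJ * (g2 * v.2 * g1)ᵀ = 0
    have key : g1 * MJ * g1ᵀ = MJ := by rw [AJA, hg1det, one_smul]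
    rw [Matrix.transpose_mul, Matrix.transpose_mul, Matrix.smul_mul, Matrix.smul_mul]
    rw [show gstar g2 * v.1 * g1 * MJ * (g1ᵀ * (v.2ᵀ * g2ᵀ))
        = gstar g2 * (v.1 * (g1 * MJ * g1ᵀ) * v.2ᵀ) * g2ᵀ from by noncomm_ring]
    rw [key, h3]
    simp
  · show (g2 * v.2 * g1)ᵀ * MT * ((h.2.2 : ℂ) • (gstar g2 * v.1 * g1)) = 0
    have key := TMgstar g2 hg2det
    rw [Matrix.transpose_mul, Matrix.transpose_mul, Matrix.mul_smul]
    rw [show g1ᵀ * (v.2ᵀ * g2ᵀ) * MT * (gstar g2 * v.1 * g1)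
        = g1ᵀ * (v.2ᵀ * (g2ᵀ * MT * gstar g2) * v.1) * g1 from by noncomm_ring]
    rw [key, h4]
    simp
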